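/- Let Q ⊆ ℝ^I be a nonempty closed convex subset of the hyperplane {q : Σᵢ qᵢ = 0}, and q(b) the Euclidean projection of b onto Q. For any i and any b, b' differing only in coordinate i with δ := b'ᵢ - bᵢ > 0, we have qᵢ(b') - qᵢ(b) ≤ ((I-1)/I)·δ. -/

import Mathlib

/-!
Projection onto a convex set is firmly nonexpansive, so `v := q b' - q b` satisfies
`‖v‖² ≤ ⟪b' - b, v⟫ = δ vᵢ`. Since `v` lies in the zero-sum hyperplane, `vᵢ = -∑_{j ≠ i} vⱼ`, and
Cauchy–Schwarz over the other `I - 1` coordinates gives `I vᵢ² ≤ (I - 1) ‖v‖²`. Hence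
`I vᵢ² ≤ (I - 1) δ vᵢ`, which bounds `vᵢ` by `(I - 1) δ / I` when it is positive.
-/

open Finset RealInnerProductSpace

section NearestPoint

variable {E : Type*} [NormedAddCommGroup E] [InnerProductSpace ℝ E] {K : Set E}

theorem inner_sub_le_zero_of_forall_norm_sub_le (hK : Convex ℝ K) {x u : E} (hu : u ∈ K)
    (hmin : ∀ y ∈ K, ‖x - u‖ ≤ ‖x - y‖) : ∀ z ∈ K, ⟪x - u, z - u⟫ ≤ 0 := by
  have : Nonempty K := ⟨⟨u, hu⟩⟩
  refine (norm_eq_iInf_iff_real_inner_le_zero hK hu).1 (le_antisymm ?_ ?_)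
  · exact le_ciInf fun w => hmin w w.2
  · exact ciInf_le ⟨0, by rintro _ ⟨w, rfl⟩; positivity⟩ (⟨u, hu⟩ : K)

theorem norm_sub_sq_le_inner_of_forall_norm_sub_le (hK : Convex ℝ K) {x x' u u' : E}
    (hu : u ∈ K) (hmin : ∀ y ∈ K, ‖x - u‖ ≤ ‖x - y‖)
    (hu' : u' ∈ K) (hmin' : ∀ y ∈ K, ‖x' - u'‖ ≤ ‖x' - y‖) :
    ‖u' - u‖ ^ 2 ≤ ⟪x' - x, u' - u⟫ := by
  have h := inner_sub_le_zero_of_forall_norm_sub_le hK hu hmin u' hu'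
  have h' := inner_sub_le_zero_of_forall_norm_sub_le hK hu' hmin' u hu
  have key : ⟪x' - x, u' - u⟫ - ‖u' - u‖ ^ 2 = -⟪x' - u', u - u'⟫ - ⟪x - u, u' - u⟫ := by
    rw [← real_inner_self_eq_norm_sq, ← inner_sub_left, ← neg_sub u' u, inner_neg_right,
      neg_neg, ← inner_sub_left]
    congr 1
    abel
  linarith

end NearestPoint

theorem EuclideanSpace.sub_eq_single_of_forall_ne {𝕜 ι : Type*} [RCLike 𝕜] [Fintype ι]
    [DecidableEq ι] {x y : EuclideanSpace 𝕜 ι} {i : ι} (h : ∀ j, j ≠ i → x j = y j) :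
    x - y = EuclideanSpace.single i (x i - y i) := by
  ext j
  by_cases hj : j = i
  · simp [hj]
  · simp [hj, h j hj]

theorem card_mul_sq_le_of_sum_eq_zero {ι : Type*} [Fintype ι] {v : ι → ℝ} (hv : ∑ j, v j = 0)
    (i : ι) : Fintype.card ι * v i ^ 2 ≤ (Fintype.card ι - 1) * ∑ j, v j ^ 2 := by
  classical
  have hrest : ∑ j ∈ univ.erase i, v j = -v i := by
    linarith [sum_erase_add univ v (mem_univ i)]
  have hcard : ((univ.erase i).card : ℝ) = Fintype.card ι - 1 := by
    rw [card_erase_of_mem (mem_univ i), Nat.cast_pred (card_pos.2 ⟨i, mem_univ i⟩), card_univ]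
  have hcs := sq_sum_le_card_mul_sum_sq (s := univ.erase i) (f := v)
  rw [hrest, hcard, neg_sq] at hcs
  rw [← add_sum_erase univ (fun j => v j ^ 2) (mem_univ i)]
  linarith

theorem le_div_mul_of_mul_sq_le {n δ t : ℝ} (hn : 1 ≤ n) (hδ : 0 < δ)
    (h : n * t ^ 2 ≤ (n - 1) * δ * t) : t ≤ (n - 1) / n * δ := by
  rw [div_mul_eq_mul_div, le_div_iff₀ (by linarith), mul_comm t]
  rcases le_or_gt t 0 with ht | ht
  · nlinarith
  · exact le_of_mul_le_mul_right (by linarith) ht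

theorem stmt11_general (I : ℕ) (Q : Set (EuclideanSpace ℝ (Fin I)))
    (hQconv : Convex ℝ Q)
    (hQsub : Q ⊆ {x : EuclideanSpace ℝ (Fin I) | (∑ j, x j) = 0})
    (q : EuclideanSpace ℝ (Fin I) → EuclideanSpace ℝ (Fin I))
    (hproj : ∀ b, q b ∈ Q ∧ ∀ y ∈ Q, ‖b - q b‖ ≤ ‖b - y‖)
    (i : Fin I) (b b' : EuclideanSpace ℝ (Fin I))
    (hdiff : ∀ j, j ≠ i → b' j = b j) (δ : ℝ) (hδ : δ = b' i - b i) (hpos : 0 < δ) :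
    q b' i - q b i ≤ (((I : ℝ) - 1) / (I : ℝ)) * δ := by
  set v := q b' - q b
  have hfirm : ‖v‖ ^ 2 ≤ δ * v i := by
    have := norm_sub_sq_le_inner_of_forall_norm_sub_le hQconv (hproj b).1 (hproj b).2
      (hproj b').1 (hproj b').2
    rwa [EuclideanSpace.sub_eq_single_of_forall_ne hdiff, ← hδ,
      EuclideanSpace.inner_single_left, conj_trivial] at this
  have hsum : ∑ j, v j = 0 := by
    have h : ∑ j, q b j = 0 := hQsub (hproj b).1
    have h' : ∑ j, q b' j = 0 := hQsub (hproj b').1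
    simp [v, sum_sub_distrib, h, h']
  have hsq := card_mul_sq_le_of_sum_eq_zero hsum i
  rw [Fintype.card_fin, ← EuclideanSpace.real_norm_sq_eq] at hsq
  have hI : (1 : ℝ) ≤ I := by exact_mod_cast Fin.pos i
  refine le_div_mul_of_mul_sq_le hI hpos (hsq.trans ?_)
  rw [mul_assoc]
  exact mul_le_mul_of_nonneg_left hfirm (by linarith)

/-- For Euclidean projection q(·) onto a nonempty closed convex subset Q of
the zero-sum hyperplane in ℝ^I (I ≥ 2), if b' differs from b only in coordinate i with
δ = b'ᵢ - bᵢ > 0, then qᵢ(b') - qᵢ(b) ≤ ((I-1)/I)·δ. -/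
theorem stmt11 (I : ℕ) (hI : 2 ≤ I) (Q : Set (EuclideanSpace ℝ (Fin I)))
    (hQne : Q.Nonempty) (hQc : IsClosed Q) (hQconv : Convex ℝ Q)
    (hQsub : Q ⊆ {x : EuclideanSpace ℝ (Fin I) | (∑ j, x j) = 0})
    (q : EuclideanSpace ℝ (Fin I) → EuclideanSpace ℝ (Fin I))
    (hproj : ∀ b, q b ∈ Q ∧ ∀ y ∈ Q, ‖b - q b‖ ≤ ‖b - y‖)
    (i : Fin I) (b b' : EuclideanSpace ℝ (Fin I))
    (hdiff : ∀ j, j ≠ i → b' j = b j) (δ : ℝ) (hδ : δ = b' i - b i) (hpos : 0 < δ) :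
    q b' i - q b i ≤ (((I : ℝ) - 1) / (I : ℝ)) * δ :=
  stmt11_general I Q hQconv hQsub q hproj i b b' hdiff δ hδ hpos
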